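/- arXiv:0912.5398 — 2 statements merged into one kernel-verified Lean document; each statement's English description precedes it below -/
import Mathlib

section
/- Let $D = \{(x_1,\dots,x_d) \in \mathbb{R}^d : x_1 > g(x_2,\dots,x_d)\}$ where $g : \mathbb{R}^{d-1} \to \mathbb{R}$ is upper semicontinuous, and let $S_1,\dots,S_N \subset \mathbb{R}^d$ be compact convex sets. Then the configuration space ${\bf D} = \{(x^1,\dots,x^N) \in \mathbb{R}^{Nd} : (S_k + x^k) \subset D \text{ for all } k, \text{ and } (S_j + x^j) \cap (S_k + x^k) = \emptyset \text{ for } j \neq k\}$ is pathwise connected. -/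
/-!
Lift all bodies far above the graph of `g`, where `g` is bounded on the relevant compact set of
horizontal positions, and then dilate the configuration about the origin: by convexity the
bodies remain disjoint while their centers drift arbitrarily far apart. Once the centers are
more than twice the radius of the bodies apart, bodies can be moved freely as long as the
centers keep apart: lift the bodies by multiples of the ranks of their heights to separate the
heights, slide them horizontally onto parallel lanes, and lower them all to a common height `Z`.
This joins every configuration to the same configuration `laneConfig v δ Z`, for every
sufficiently large `Z`.
-/

open Set Filter

namespace BodyConfig

variable {V ι : Type*} [NormedAddCommGroup V]

def configSpace (g : V → ℝ) (S : ι → Set (ℝ × V)) : Set (ι → ℝ × V) :=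
  {x | (∀ k, (fun s => s + x k) '' S k ⊆ {p | g p.2 < p.1}) ∧
    Pairwise fun j k => ((fun s => s + x j) '' S j) ∩ ((fun s => s + x k) '' S k) = ∅}

def BodiesAbove (g : V → ℝ) (S : ι → Set (ℝ × V)) (x : ι → ℝ × V) : Prop :=
  ∀ k, ∀ s ∈ S k, g (s + x k).2 < (s + x k).1

def BodiesDisjoint (S : ι → Set (ℝ × V)) (x : ι → ℝ × V) : Prop :=
  Pairwise fun j k => ∀ s ∈ S j, ∀ s' ∈ S k, s + x j ≠ s' + x k

def safeConfigs (R Z δ : ℝ) : Set (ι → ℝ × V) :=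
  {x | (∀ k, x k ∈ Ici Z ×ˢ Metric.closedBall 0 R) ∧
    Pairwise fun j k => δ ≤ dist (x j) (x k)}

variable {g : V → ℝ} {S : ι → Set (ℝ × V)} {x : ι → ℝ × V}

lemma mem_configSpace_iff : x ∈ configSpace g S ↔ BodiesAbove g S x ∧ BodiesDisjoint S x := by
  refine and_congr ⟨fun h k s hs => h k ⟨s, hs, rfl⟩, ?_⟩
    ⟨fun h j k hjk s hs s' hs' he => ?_, ?_⟩
  · rintro h k _ ⟨s, hs, rfl⟩
    exact h k s hs
  · have : s + x j ∈ ((fun s => s + x j) '' S j) ∩ ((fun s => s + x k) '' S k) :=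
      ⟨⟨s, hs, rfl⟩, ⟨s', hs', he.symm⟩⟩
    rwa [h hjk] at this
  · intro h j k hjk
    refine eq_empty_of_forall_notMem ?_
    rintro _ ⟨⟨s, hs, rfl⟩, ⟨s', hs', he⟩⟩
    exact h hjk s hs s' hs' he.symm

section Bounds

variable {ρ R M Z δ : ℝ}

lemma bodiesAbove_of_mem_box (hρ : ∀ k, ∀ s ∈ S k, ‖s‖ ≤ ρ)
    (hM : ∀ z ∈ Metric.closedBall (0 : V) (R + ρ), g z ≤ M) (hZ : M + ρ < Z)
    (hx : ∀ k, x k ∈ Ici Z ×ˢ Metric.closedBall 0 R) : BodiesAbove g S x := by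
  intro k s hs
  obtain ⟨hx₁, hx₂⟩ := hx k
  rw [mem_Ici] at hx₁
  rw [mem_closedBall_zero_iff] at hx₂
  have hs₁ : -ρ ≤ s.1 := neg_le_of_abs_le ((norm_fst_le s).trans (hρ k s hs))
  have hg : g (s + x k).2 ≤ M := by
    refine hM _ (mem_closedBall_zero_iff.2 ?_)
    calc ‖s.2 + (x k).2‖ ≤ ‖s.2‖ + ‖(x k).2‖ := norm_add_le _ _
      _ ≤ ρ + R := add_le_add ((norm_snd_le s).trans (hρ k s hs)) hx₂
      _ = R + ρ := add_comm _ _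
  change g (s + x k).2 < s.1 + (x k).1
  linarith

lemma bodiesDisjoint_of_two_mul_lt_dist (hρ : ∀ k, ∀ s ∈ S k, ‖s‖ ≤ ρ)
    (hx : Pairwise fun j k => 2 * ρ < dist (x j) (x k)) : BodiesDisjoint S x := by
  intro j k hjk s hs s' hs' he
  have hdiff : x j - x k = s' - s := by
    rw [sub_eq_sub_iff_add_eq_add, add_comm, he, add_comm]
  have : dist (x j) (x k) ≤ 2 * ρ := by
    rw [dist_eq_norm, hdiff, two_mul]
    exact (norm_sub_le _ _).trans (add_le_add (hρ k s' hs') (hρ j s hs))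
  exact (hx hjk).not_ge this

lemma safeConfigs_subset_configSpace (hρ : ∀ k, ∀ s ∈ S k, ‖s‖ ≤ ρ)
    (hM : ∀ z ∈ Metric.closedBall (0 : V) (R + ρ), g z ≤ M) (hZ : M + ρ < Z)
    (hδ : 2 * ρ < δ) : safeConfigs R Z δ ⊆ configSpace g S := fun _ hx =>
  mem_configSpace_iff.2 ⟨bodiesAbove_of_mem_box hρ hM hZ hx.1,
    bodiesDisjoint_of_two_mul_lt_dist hρ (hx.2.mono fun _ _ h => hδ.trans_le h)⟩

end Bounds

lemma add_fst_mem_configSpace (hx : x ∈ configSpace g S) {c : ℝ} (hc : 0 ≤ c) :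
    (fun k => x k + (c, 0)) ∈ configSpace g S := by
  obtain ⟨hx_above, hx_disj⟩ := mem_configSpace_iff.1 hx
  refine mem_configSpace_iff.2 ⟨fun k s hs => ?_, fun j k hjk s hs s' hs' he => ?_⟩
  · have := hx_above k s hs
    simp only [Prod.fst_add, Prod.snd_add, add_zero] at this ⊢
    linarith
  · rw [← add_assoc, ← add_assoc] at he
    exact hx_disj hjk s hs s' hs' (add_right_cancel he)

variable [NormedSpace ℝ V]

lemma joinedIn_add_fst (hx : x ∈ configSpace g S) {c : ℝ} (hc : 0 ≤ c) :
    JoinedIn (configSpace g S) x fun k => x k + (c, 0) := by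
  refine JoinedIn.of_segment_subset ?_
  rw [segment_eq_image']
  rintro _ ⟨t, ⟨ht, -⟩, rfl⟩
  convert add_fst_mem_configSpace hx (mul_nonneg ht hc) using 1
  ext k <;> simp

/-- By convexity, body `j` of the dilated configuration lies in the `(1 + t)`-dilate of body `j`
of `x`, and dilates of disjoint sets are disjoint. -/
lemma BodiesDisjoint.dilate (hS : ∀ k, Convex ℝ (S k)) {a : ι → ℝ × V}
    (ha : ∀ k, a k ∈ S k) (hx : BodiesDisjoint S x) {t : ℝ} (ht : 0 ≤ t) :
    BodiesDisjoint S fun k => x k + t • (x k + a k) := by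
  intro j k hjk s hs s' hs' he
  have ht₁ : (0 : ℝ) < 1 + t := by linarith
  have hsum : (1 + t)⁻¹ + t / (1 + t) = 1 := by field_simp
  have hdilate : ∀ i p, p + (x i + t • (x i + a i)) =
      (1 + t) • (((1 + t)⁻¹ • p + (t / (1 + t)) • a i) + x i) := by
    intro i p
    match_scalars <;> field_simp
  rw [hdilate, hdilate] at he
  exact hx hjk _ (hS j hs (ha j) (by positivity) (by positivity) hsum)
    _ (hS k hs' (ha k) (by positivity) (by positivity) hsum)
    (smul_right_injective _ ht₁.ne' he)

lemma add_smul_add_mem_box {p a : ℝ × V} {s T R Z : ℝ} (hs : 0 ≤ s) (hsT : s ≤ T)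
    (hp : Z ≤ p.1) (hpa : 0 ≤ p.1 + a.1) (hR : ‖p.2‖ + T * ‖p.2 + a.2‖ ≤ R) :
    p + s • (p + a) ∈ Ici Z ×ˢ Metric.closedBall 0 R := by
  refine ⟨?_, mem_closedBall_zero_iff.2 ?_⟩
  · change Z ≤ p.1 + s * (p.1 + a.1)
    nlinarith
  · calc ‖p.2 + s • (p.2 + a.2)‖ ≤ ‖p.2‖ + s * ‖p.2 + a.2‖ := by
          refine (norm_add_le _ _).trans_eq ?_
          rw [norm_smul, Real.norm_of_nonneg hs]
      _ ≤ R := le_trans (by gcongr) hR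

lemma joinedIn_dilate {ρ R M Z T : ℝ} (hS : ∀ k, Convex ℝ (S k)) {a : ι → ℝ × V}
    (ha : ∀ k, a k ∈ S k) (hρ : ∀ k, ∀ s ∈ S k, ‖s‖ ≤ ρ)
    (hM : ∀ z ∈ Metric.closedBall (0 : V) (R + ρ), g z ≤ M) (hZ : M + ρ < Z)
    (hx : BodiesDisjoint S x) (hT : 0 ≤ T) (hx₁ : ∀ k, Z ≤ (x k).1 ∧ 0 ≤ (x k).1 + (a k).1)
    (hx₂ : ∀ k, ‖(x k).2‖ + T * ‖(x k).2 + (a k).2‖ ≤ R) :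
    JoinedIn (configSpace g S) x fun k => x k + T • (x k + a k) := by
  refine JoinedIn.of_segment_subset ?_
  rw [segment_eq_image']
  rintro _ ⟨t, ⟨ht₀, ht₁⟩, rfl⟩
  dsimp only
  have hpoint : x + t • ((fun k => x k + T • (x k + a k)) - x) =
      fun k => x k + (t * T) • (x k + a k) := by
    ext k <;> simp [mul_smul]
  have htT : t * T ≤ T := mul_le_of_le_one_left hT ht₁
  rw [hpoint, mem_configSpace_iff]
  exact ⟨bodiesAbove_of_mem_box hρ hM hZ fun k =>
      add_smul_add_mem_box (by positivity) htT (hx₁ k).1 (hx₁ k).2 (hx₂ k),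
    hx.dilate hS ha (by positivity)⟩

lemma BodiesDisjoint.eventually_dilate_spread [Finite ι] {a : ι → ℝ × V}
    (ha : ∀ k, a k ∈ S k) (hx : BodiesDisjoint S x) (δ : ℝ) :
    ∀ᶠ T : ℝ in atTop, Pairwise fun j k =>
      δ ≤ dist (x j + T • (x j + a j)) (x k + T • (x k + a k)) := by
  refine eventually_all.2 fun j => eventually_all.2 fun k => ?_
  rcases eq_or_ne j k with rfl | hjk
  · exact Eventually.of_forall fun _ h => (h rfl).elim
  have hd : 0 < dist (x j + a j) (x k + a k) := by
    rw [dist_pos, add_comm (x j), add_comm (x k)]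
    exact hx hjk _ (ha j) _ (ha k)
  filter_upwards [eventually_ge_atTop ((δ + dist (x j) (x k)) / dist (x j + a j) (x k + a k)),
    eventually_ge_atTop (0 : ℝ)] with T hT hT₀ _
  rw [div_le_iff₀ hd] at hT
  have hsmul := dist_add_add_le (x j + T • (x j + a j)) (-x j) (x k + T • (x k + a k)) (-x k)
  rw [dist_neg_neg, add_neg_cancel_comm, add_neg_cancel_comm, dist_smul₀,
    Real.norm_of_nonneg hT₀] at hsmul
  linarith

lemma abs_le_abs_add_of_mul_nonneg {a b : ℝ} (h : 0 ≤ a * b) : |a| ≤ |a + b| :=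
  sq_le_sq.1 (by nlinarith)

lemma one_le_abs_natCast_sub {a b : ℕ} (h : a ≠ b) : (1 : ℝ) ≤ |(a : ℝ) - b| := by
  have := Int.one_le_abs (sub_ne_zero.2 (Int.natCast_inj.not.2 h))
  exact_mod_cast this

lemma exists_equiv_le_imp_le {N : ℕ} (f : Fin N → ℝ) :
    ∃ r : Fin N ≃ Fin N, ∀ j k, r j ≤ r k → f j ≤ f k :=
  ⟨(Tuple.sort f).symm, fun j k h => by simpa using Tuple.monotone_sort f h⟩

section Safe

variable {R Z δ : ℝ}

lemma joinedIn_safeConfigs_of_segment {x y : ι → ℝ × V}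
    (hx : ∀ k, x k ∈ Ici Z ×ˢ Metric.closedBall 0 R)
    (hy : ∀ k, y k ∈ Ici Z ×ˢ Metric.closedBall 0 R)
    (hxy : ∀ t ∈ Icc (0 : ℝ) 1, Pairwise fun j k =>
      δ ≤ dist (x j + t • (y j - x j)) (x k + t • (y k - x k))) :
    JoinedIn (safeConfigs R Z δ) x y := by
  refine JoinedIn.of_segment_subset ?_
  rw [segment_eq_image']
  rintro _ ⟨t, ht, rfl⟩
  exact ⟨fun k =>
    ((convex_Ici Z).prod (convex_closedBall 0 R)).add_smul_sub_mem (hx k) (hy k) ht, hxy t ht⟩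

lemma joinedIn_safeConfigs_of_fst_eq {x y : ι → ℝ × V}
    (hx : ∀ k, x k ∈ Ici Z ×ˢ Metric.closedBall 0 R)
    (hy : ∀ k, y k ∈ Ici Z ×ˢ Metric.closedBall 0 R) (hfst : ∀ k, (y k).1 = (x k).1)
    (hsep : Pairwise fun j k => δ ≤ dist (x j).1 (x k).1) :
    JoinedIn (safeConfigs R Z δ) x y :=
  joinedIn_safeConfigs_of_segment hx hy fun t _ j k hjk =>
    (hsep hjk).trans <| by rw [Prod.dist_eq]; exact le_max_of_le_left (by simp [hfst])

lemma joinedIn_safeConfigs_of_snd_eq {x y : ι → ℝ × V}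
    (hx : ∀ k, x k ∈ Ici Z ×ˢ Metric.closedBall 0 R)
    (hy : ∀ k, y k ∈ Ici Z ×ˢ Metric.closedBall 0 R) (hsnd : ∀ k, (y k).2 = (x k).2)
    (hsep : Pairwise fun j k => δ ≤ dist (x j).2 (x k).2) :
    JoinedIn (safeConfigs R Z δ) x y :=
  joinedIn_safeConfigs_of_segment hx hy fun t _ j k hjk =>
    (hsep hjk).trans <| by rw [Prod.dist_eq]; exact le_max_of_le_right (by simp [hsnd])

/-- The lifts are ordered like the heights, so no two centers get closer on the way. -/
lemma exists_joinedIn_safeConfigs_fst_spread {N : ℕ} (hδ : 0 ≤ δ) {w : Fin N → ℝ × V}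
    (hw : w ∈ safeConfigs R Z δ) :
    ∃ w', JoinedIn (safeConfigs R Z δ) w w' ∧
      Pairwise fun j k => δ ≤ dist (w' j).1 (w' k).1 := by
  obtain ⟨r, hr⟩ := exists_equiv_le_imp_le fun k => (w k).1
  set lift : Fin N → ℝ := fun k => δ * (r k : ℕ) with lift_def
  have hmono : ∀ j k, 0 ≤ ((w j).1 - (w k).1) * (lift j - lift k) := by
    intro j k
    rcases le_total (r j) (r k) with hjk | hjk
    · have : lift j ≤ lift k := by simp only [lift_def]; gcongr; exact hjk
      nlinarith [hr j k hjk]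
    · have : lift k ≤ lift j := by simp only [lift_def]; gcongr; exact hjk
      nlinarith [hr k j hjk]
  have hpoint : ∀ t i,
      w i + t • ((w i + (lift i, 0)) - w i) = ((w i).1 + t * lift i, (w i).2) := by
    intro t i
    ext <;> simp
  refine ⟨fun k => w k + (lift k, 0), joinedIn_safeConfigs_of_segment hw.1 (fun k => ?_)
    (fun t ht j k hjk => ?_), fun j k hjk => ?_⟩
  · obtain ⟨hw₁, hw₂⟩ := hw.1 k
    refine ⟨?_, by simpa using hw₂⟩
    have : 0 ≤ lift k := by positivity
    simp only [mem_Ici, Prod.fst_add] at hw₁ ⊢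
    linarith
  · refine (hw.2 hjk).trans ?_
    rw [hpoint, hpoint, Prod.dist_eq, Prod.dist_eq, Real.dist_eq, Real.dist_eq,
      show (w j).1 + t * lift j - ((w k).1 + t * lift k) =
        ((w j).1 - (w k).1) + t * (lift j - lift k) by ring]
    exact max_le_max_right _ (abs_le_abs_add_of_mul_nonneg (by nlinarith [hmono j k, ht.1]))
  · calc δ ≤ δ * |((r j : ℕ) : ℝ) - (r k : ℕ)| := le_mul_of_one_le_right hδ
          (one_le_abs_natCast_sub (Fin.val_ne_of_ne (r.injective.ne hjk)))
      _ = |lift j - lift k| := by rw [lift_def, ← mul_sub, abs_mul, abs_of_nonneg hδ]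
      _ ≤ |(lift j - lift k) + ((w j).1 - (w k).1)| :=
          abs_le_abs_add_of_mul_nonneg (by nlinarith [hmono j k])
      _ = dist (w j + (lift j, 0)).1 (w k + (lift k, 0)).1 := by
          rw [Real.dist_eq]; congr 1; simp only [Prod.fst_add]; ring

def laneConfig {N : ℕ} (v : V) (δ Z : ℝ) : Fin N → ℝ × V :=
  fun k => (Z, (δ * (k : ℕ)) • v)

lemma joinedIn_safeConfigs_laneConfig {N : ℕ} {v : V} (hv : ‖v‖ = 1) (hδ : 0 ≤ δ)
    (hR : δ * N ≤ R) {w : Fin N → ℝ × V} (hw : w ∈ safeConfigs R Z δ) :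
    JoinedIn (safeConfigs R Z δ) w (laneConfig v δ Z) := by
  obtain ⟨w', hww', hw'⟩ := exists_joinedIn_safeConfigs_fst_spread hδ hw
  have hlane : ∀ k : Fin N, (δ * (k : ℕ)) • v ∈ Metric.closedBall 0 R := fun k => by
    rw [mem_closedBall_zero_iff, norm_smul, hv, mul_one, Real.norm_of_nonneg (by positivity)]
    exact le_trans (by gcongr; exact k.isLt.le) hR
  have hlane_sep : Pairwise fun j k : Fin N =>
      δ ≤ dist ((δ * (j : ℕ)) • v) ((δ * (k : ℕ)) • v) := fun j k hjk => by
    dsimp only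
    rw [dist_eq_norm, ← sub_smul, norm_smul, hv, mul_one, ← mul_sub, Real.norm_eq_abs, abs_mul,
      abs_of_nonneg hδ]
    exact le_mul_of_one_le_right hδ (one_le_abs_natCast_sub (Fin.val_ne_of_ne hjk))
  have hw'_high : ∀ k, (w' k).1 ∈ Ici Z := fun k => (hww'.target_mem.1 k).1
  exact hww'.trans
    ((joinedIn_safeConfigs_of_fst_eq (y := fun k => ((w' k).1, (δ * (k : ℕ)) • v))
      hww'.target_mem.1 (fun k => ⟨hw'_high k, hlane k⟩) (fun _ => rfl) hw').trans
    (joinedIn_safeConfigs_of_snd_eq (fun k => ⟨hw'_high k, hlane k⟩)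
      (fun k => ⟨self_mem_Ici, hlane k⟩) (fun _ => rfl) hlane_sep))

end Safe

theorem eventually_joinedIn_laneConfig [ProperSpace V] {N : ℕ} {S : Fin N → Set (ℝ × V)}
    {u : Fin N → ℝ × V} {a : Fin N → ℝ × V} {v : V} {ρ δ : ℝ} (hg : UpperSemicontinuous g)
    (hS : ∀ k, Convex ℝ (S k)) (ha : ∀ k, a k ∈ S k) (hρ₀ : 0 ≤ ρ)
    (hρ : ∀ k, ∀ s ∈ S k, ‖s‖ ≤ ρ) (hδ : 2 * ρ < δ) (hv : ‖v‖ = 1) (hu : u ∈ configSpace g S) :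
    ∀ᶠ Z in atTop, JoinedIn (configSpace g S) u (laneConfig v δ Z) := by
  have hu_disj := (mem_configSpace_iff.1 hu).2
  obtain ⟨T, hT, hT₀⟩ := ((hu_disj.eventually_dilate_spread ha δ).and
    (eventually_ge_atTop 0)).exists
  obtain ⟨R, hRN, hR⟩ := ((eventually_ge_atTop (δ * N)).and (eventually_all.2 fun k =>
    eventually_ge_atTop (‖(u k).2‖ + T * ‖(u k).2 + (a k).2‖))).exists
  obtain ⟨M, hM⟩ := (hg.upperSemicontinuousOn _).bddAbove_of_isCompact
    (isCompact_closedBall (0 : V) (R + ρ))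
  replace hM : ∀ z ∈ Metric.closedBall (0 : V) (R + ρ), g z ≤ M := fun z hz => hM ⟨z, hz, rfl⟩
  filter_upwards [eventually_gt_atTop (M + ρ)] with Z hZ
  obtain ⟨L, hL₀, hL⟩ := ((eventually_ge_atTop 0).and (eventually_all.2 fun k =>
    (eventually_ge_atTop (Z - (u k).1)).and
      (eventually_ge_atTop (-((u k).1 + (a k).1))))).exists
  set x : Fin N → ℝ × V := fun k => u k + (L, 0) with hx
  have hx₁ : ∀ k, Z ≤ (x k).1 ∧ 0 ≤ (x k).1 + (a k).1 := fun k => by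
    simp only [hx, Prod.fst_add]
    constructor <;> linarith [(hL k).1, (hL k).2]
  have hx₂ : ∀ k, ‖(x k).2‖ + T * ‖(x k).2 + (a k).2‖ ≤ R := fun k => by
    simpa [hx] using hR k
  have hx_disj : BodiesDisjoint S x :=
    (mem_configSpace_iff.1 (add_fst_mem_configSpace hu hL₀)).2
  have hw : (fun k => x k + T • (x k + a k)) ∈ safeConfigs R Z δ := by
    refine ⟨fun k => add_smul_add_mem_box hT₀ le_rfl (hx₁ k).1 (hx₁ k).2 (hx₂ k),
      fun j k hjk => (hT hjk).trans_eq ?_⟩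
    have hshift : ∀ i, x i + T • (x i + a i) = (u i + T • (u i + a i)) + (1 + T) • (L, 0) :=
      fun i => by simp only [hx]; module
    beta_reduce
    rw [hshift, hshift, dist_add_right]
  have hlift := joinedIn_add_fst hu hL₀
  have hdilate := joinedIn_dilate hS ha hρ hM hZ hx_disj hT₀ hx₁ hx₂
  have hrearrange := (joinedIn_safeConfigs_laneConfig hv (by linarith) hRN hw).mono
    (safeConfigs_subset_configSpace hρ hM hZ hδ)
  exact hlift.trans (hdilate.trans hrearrange)

theorem joinedIn_configSpace [ProperSpace V] [Nontrivial V] {N : ℕ} {S : Fin N → Set (ℝ × V)}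
    (hg : UpperSemicontinuous g) (hS_ne : ∀ k, (S k).Nonempty)
    (hS_compact : ∀ k, IsCompact (S k)) (hS_convex : ∀ k, Convex ℝ (S k))
    {x y : Fin N → ℝ × V} (hx : x ∈ configSpace g S)
    (hy : y ∈ configSpace g S) : JoinedIn (configSpace g S) x y := by
  obtain ⟨ρ, hρ₀, hρ⟩ := (isCompact_iUnion hS_compact).isBounded.exists_pos_norm_le
  choose a ha using hS_ne
  obtain ⟨v, hv⟩ := exists_norm_eq V zero_le_one
  have hδ : 2 * ρ < 2 * ρ + 1 := lt_add_one _
  have hρ' : ∀ k, ∀ s ∈ S k, ‖s‖ ≤ ρ := fun k s hs => hρ s (mem_iUnion_of_mem k hs)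
  obtain ⟨Z, hxZ, hyZ⟩ :=
    ((eventually_joinedIn_laneConfig hg hS_convex ha hρ₀.le hρ' hδ hv hx).and
      (eventually_joinedIn_laneConfig hg hS_convex ha hρ₀.le hρ' hδ hv hy)).exists
  exact hxZ.trans hyZ.symm

end BodyConfig

/-- A point of `ℝ^d` is modeled as `ℝ × (Fin m → ℝ)` with `m = d - 1 ≥ 1`, the
first factor being the coordinate `x₁`; `D` is the open region strictly above
the graph of an upper semicontinuous function `g`. -/
theorem stmt_5 {m : ℕ} (hm : 1 ≤ m) {N : ℕ}
    (g : (Fin m → ℝ) → ℝ) (hg : UpperSemicontinuous g)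
    (S : Fin N → Set (ℝ × (Fin m → ℝ)))
    (hSne : ∀ k, (S k).Nonempty)
    (hScompact : ∀ k, IsCompact (S k))
    (hSconvex : ∀ k, Convex ℝ (S k)) :
    ∀ x ∈ {x : Fin N → ℝ × (Fin m → ℝ) |
        (∀ k, (fun s => s + x k) '' S k ⊆ {p | g p.2 < p.1}) ∧
        Pairwise fun j k =>
          ((fun s => s + x j) '' S j) ∩ ((fun s => s + x k) '' S k) = ∅},
      ∀ y ∈ {x : Fin N → ℝ × (Fin m → ℝ) |
        (∀ k, (fun s => s + x k) '' S k ⊆ {p | g p.2 < p.1}) ∧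
        Pairwise fun j k =>
          ((fun s => s + x j) '' S j) ∩ ((fun s => s + x k) '' S k) = ∅},
      JoinedIn {x : Fin N → ℝ × (Fin m → ℝ) |
        (∀ k, (fun s => s + x k) '' S k ⊆ {p | g p.2 < p.1}) ∧
        Pairwise fun j k =>
          ((fun s => s + x j) '' S j) ∩ ((fun s => s + x k) '' S k) = ∅} x y := by
  have : Nonempty (Fin m) := ⟨⟨0, hm⟩⟩
  exact fun x hx y hy => BodyConfig.joinedIn_configSpace hg hSne hScompact hSconvex hx hy
end

section
/- Let $D = \{(x_1,\dots,x_d) \in \mathbb{R}^d : x_1 > 0,\ x_2^2 + \dots + x_d^2 < 1\}$ be a one-sided open cylinder, and let $S_k = \overline{B}(0, r_k)$ be closed balls with diameters $2r_k < 1$ for $k = 1,\dots,N$. Then the configuration space ${\bf D} = \{(x^1,\dots,x^N) \in \mathbb{R}^{Nd} : \overline{B}(x^k, r_k) \subset D \text{ for all } k, \text{ and } \overline{B}(x^j, r_j) \cap \overline{B}(x^k, r_k) = \emptyset \text{ for } j \neq k\}$ is pathwise connected. -/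
/-!
A configuration is admissible iff every centre `c` has `r < c₀` and `‖c'‖ + r < 1`, where `c'`
is its component transverse to the axis, and distinct centres are more than `r j + r k` apart.
Sort the balls by their axial coordinate and push ball `k` up the axis by `T` times its rank:
the push is monotone in the axial coordinate, so no distance decreases, and for large `T` the
balls end up at least `1` apart along the axis. Balls that far apart can be moved freely: flatten
the transverse components to `0`, then slide the centres to the points `1, …, N` of the axis in
the order of the ranks. Any two such canonical configurations are connected, because adjacent
transpositions generate the symmetric group and two neighbours exchange their places by stepping
aside to `±e₁ / 2`, which puts them at distance `1`, sliding past each other and stepping back.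
-/

open Metric Set

lemma joinedIn_of_forall_mem_segment {E : Type*} [NormedAddCommGroup E] [NormedSpace ℝ E]
    {s : Set E} {x y : E} (h : ∀ t ∈ Icc (0 : ℝ) 1, (1 - t) • x + t • y ∈ s) : JoinedIn s x y :=
  JoinedIn.of_segment_subset <| by
    rw [segment_eq_image]
    rintro _ ⟨t, ht, rfl⟩
    exact h t ht

lemma Tuple.monovary_sort_symm {n : ℕ} {α : Type*} [LinearOrder α] (f : Fin n → α) :
    Monovary (Tuple.sort f).symm f := fun j k h => by
  by_contra hlt
  have := Tuple.monotone_sort f (not_le.mp hlt).le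
  simp only [Function.comp_apply, Equiv.apply_symm_apply] at this
  exact this.not_gt h

lemma Equiv.swap_lt_swap_of_lt {n : ℕ} {c s i j : Fin n} (hcs : (s : ℕ) = c + 1) (h : i < j)
    (hne : ¬(i = c ∧ j = s)) : swap c s i < swap c s j := by
  simp only [swap_apply_def]
  split_ifs <;> simp only [Fin.lt_def, Fin.ext_iff] at * <;> omega

lemma Fin.cast_val_add_one_le_of_lt {n : ℕ} {i j : Fin n} (h : i < j) :
    ((i : ℕ) : ℝ) + 1 ≤ (j : ℕ) :=
  mod_cast h

lemma Fin.one_le_abs_sub_of_ne {n : ℕ} {i j : Fin n} (h : i ≠ j) :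
    1 ≤ |((i : ℕ) : ℝ) - (j : ℕ)| := by
  rcases h.lt_or_gt with h | h
  · exact le_abs.mpr (Or.inr (by linarith [Fin.cast_val_add_one_le_of_lt h]))
  · exact le_abs.mpr (Or.inl (by linarith [Fin.cast_val_add_one_le_of_lt h]))

variable {d : ℕ} [NeZero d]

def transverse : EuclideanSpace ℝ (Fin d) →ₗ[ℝ] EuclideanSpace ℝ (Fin d) where
  toFun v := WithLp.toLp 2 fun i => if i = 0 then 0 else v i
  map_add' v w := by ext i; by_cases hi : i = 0 <;> simp [hi]
  map_smul' a v := by ext i; by_cases hi : i = 0 <;> simp [hi]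

lemma transverse_apply (v : EuclideanSpace ℝ (Fin d)) (i : Fin d) :
    transverse v i = if i = 0 then 0 else v i := rfl

lemma transverse_single_zero (a : ℝ) :
    transverse (EuclideanSpace.single (0 : Fin d) a) = 0 := by
  ext i; by_cases hi : i = 0 <;> simp [transverse_apply, hi]

lemma transverse_of_apply_zero {v : EuclideanSpace ℝ (Fin d)} (hv : v 0 = 0) :
    transverse v = v := by
  ext i; by_cases hi : i = 0 <;> simp [transverse_apply, hi, hv]

lemma transverse_apply_zero (v : EuclideanSpace ℝ (Fin d)) : transverse v 0 = 0 := rfl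

lemma transverse_transverse (v : EuclideanSpace ℝ (Fin d)) :
    transverse (transverse v) = transverse v :=
  transverse_of_apply_zero (transverse_apply_zero v)

lemma transverse_single_zero_add (a : ℝ) (v : EuclideanSpace ℝ (Fin d)) :
    transverse (EuclideanSpace.single 0 a + v) = transverse v := by
  rw [map_add, transverse_single_zero, zero_add]

lemma add_single_zero_eq (v : EuclideanSpace ℝ (Fin d)) (a : ℝ) :
    v + EuclideanSpace.single 0 a = EuclideanSpace.single 0 (v 0 + a) + transverse v := by
  ext i; by_cases hi : i = 0 <;> simp [transverse_apply, hi]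

lemma sum_erase_zero_sq_eq_norm_transverse_sq (v : EuclideanSpace ℝ (Fin d)) :
    ∑ i ∈ Finset.univ.erase (0 : Fin d), v i ^ 2 = ‖transverse v‖ ^ 2 := by
  rw [EuclideanSpace.norm_sq_eq, ← Finset.add_sum_erase _ _ (Finset.mem_univ 0)]
  simp only [transverse_apply, if_pos, norm_zero, zero_pow two_ne_zero, zero_add]
  refine Finset.sum_congr rfl fun i hi => ?_
  simp [Finset.ne_of_mem_erase hi]

lemma norm_sq_eq_sq_add_norm_transverse_sq (v : EuclideanSpace ℝ (Fin d)) :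
    ‖v‖ ^ 2 = v 0 ^ 2 + ‖transverse v‖ ^ 2 := by
  rw [← sum_erase_zero_sq_eq_norm_transverse_sq, Finset.add_sum_erase _ (fun i => v i ^ 2)
    (Finset.mem_univ 0), EuclideanSpace.norm_sq_eq]
  simp

lemma abs_sub_apply_zero_le_dist (v w : EuclideanSpace ℝ (Fin d)) : |v 0 - w 0| ≤ dist v w := by
  refine abs_le_of_sq_le_sq ?_ dist_nonneg
  rw [dist_eq_norm, norm_sq_eq_sq_add_norm_transverse_sq (v - w)]
  simp

lemma norm_transverse_sub_le_dist (v w : EuclideanSpace ℝ (Fin d)) :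
    ‖transverse v - transverse w‖ ≤ dist v w := by
  refine le_of_sq_le_sq ?_ dist_nonneg
  rw [dist_eq_norm, norm_sq_eq_sq_add_norm_transverse_sq (v - w), map_sub]
  simpa using sq_nonneg ((v - w) 0)

def cylinder (d : ℕ) [NeZero d] : Set (EuclideanSpace ℝ (Fin d)) :=
  {z | 0 < z 0 ∧ ∑ i ∈ Finset.univ.erase (0 : Fin d), z i ^ 2 < 1}

lemma mem_cylinder_iff {z : EuclideanSpace ℝ (Fin d)} :
    z ∈ cylinder d ↔ 0 < z 0 ∧ ‖transverse z‖ < 1 := by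
  rw [cylinder, mem_ofPred_eq, sum_erase_zero_sq_eq_norm_transverse_sq,
    sq_lt_one_iff₀ (norm_nonneg _)]

lemma exists_norm_eq_one_transverse_eq_smul (hd : 2 ≤ d) (v : EuclideanSpace ℝ (Fin d)) :
    ∃ u, ‖u‖ = 1 ∧ transverse u = u ∧ transverse v = ‖transverse v‖ • u := by
  by_cases hv : transverse v = 0
  · refine ⟨EuclideanSpace.single ⟨1, hd⟩ 1, by simp, transverse_of_apply_zero ?_, by simp [hv]⟩
    simp [Fin.ext_iff]
  · refine ⟨‖transverse v‖⁻¹ • transverse v, norm_smul_inv_norm hv, ?_, ?_⟩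
    · rw [map_smul, transverse_transverse]
    · rw [smul_inv_smul₀ (norm_ne_zero_iff.mpr hv)]

lemma closedBall_subset_cylinder {c : EuclideanSpace ℝ (Fin d)} {ρ : ℝ} (h0 : ρ < c 0)
    (h : ‖transverse c‖ + ρ < 1) : closedBall c ρ ⊆ cylinder d := by
  intro z hz
  rw [mem_closedBall] at hz
  have haxial := (abs_le.mp ((abs_sub_apply_zero_le_dist z c).trans hz)).1
  have htrans := norm_le_norm_add_norm_sub' (transverse z) (transverse c)
  exact mem_cylinder_iff.mpr ⟨by linarith, by linarith [norm_transverse_sub_le_dist z c]⟩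

lemma closedBall_subset_cylinder_iff (hd : 2 ≤ d) {c : EuclideanSpace ℝ (Fin d)} {ρ : ℝ}
    (hρ : 0 ≤ ρ) : closedBall c ρ ⊆ cylinder d ↔ ρ < c 0 ∧ ‖transverse c‖ + ρ < 1 := by
  refine ⟨fun h => ⟨?_, ?_⟩, fun h => closedBall_subset_cylinder h.1 h.2⟩
  · have hz : c - EuclideanSpace.single 0 ρ ∈ closedBall c ρ := by simp [abs_of_nonneg hρ]
    simpa using (mem_cylinder_iff.mp (h hz)).1
  · obtain ⟨u, hu, hutr, hc⟩ := exists_norm_eq_one_transverse_eq_smul hd c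
    have hz : c + ρ • u ∈ closedBall c ρ := by simp [norm_smul, hu, abs_of_nonneg hρ]
    have := (mem_cylinder_iff.mp (h hz)).2
    rwa [map_add, map_smul, hutr, hc, ← add_smul, norm_smul, hu, mul_one, Real.norm_eq_abs,
      abs_of_nonneg (by positivity)] at this

section configuration

variable {N : ℕ} {r : Fin N → ℝ}

variable (d r) in
def configSpace : Set (Fin N → EuclideanSpace ℝ (Fin d)) :=
  {x | (∀ k, closedBall (x k) (r k) ⊆ cylinder d) ∧
    Pairwise fun j k => closedBall (x j) (r j) ∩ closedBall (x k) (r k) = ∅}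

lemma mem_configSpace_of {x : Fin N → EuclideanSpace ℝ (Fin d)}
    (hx : ∀ k, r k < x k 0 ∧ ‖transverse (x k)‖ + r k < 1)
    (hsep : Pairwise fun j k => r j + r k < dist (x j) (x k)) : x ∈ configSpace d r :=
  ⟨fun k => closedBall_subset_cylinder (hx k).1 (hx k).2, fun _ _ hjk =>
    disjoint_iff_inter_eq_empty.mp (closedBall_disjoint_closedBall (hsep hjk))⟩

lemma mem_configSpace_iff (hd : 2 ≤ d) (hr : ∀ k, 0 ≤ r k) {x : Fin N → EuclideanSpace ℝ (Fin d)} :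
    x ∈ configSpace d r ↔ (∀ k, r k < x k 0 ∧ ‖transverse (x k)‖ + r k < 1) ∧
      Pairwise fun j k => r j + r k < dist (x j) (x k) := by
  refine ⟨fun ⟨hcyl, hdisj⟩ => ⟨fun k => (closedBall_subset_cylinder_iff hd (hr k)).mp (hcyl k),
    fun j k hjk => ?_⟩, fun h => mem_configSpace_of h.1 h.2⟩
  exact (disjoint_closedBall_closedBall_iff (hr j) (hr k)).mp
    (disjoint_iff_inter_eq_empty.mpr (hdisj hjk))

lemma mem_configSpace_of_one_le_dist (hr : ∀ k, 2 * r k < 1) {x : Fin N → EuclideanSpace ℝ (Fin d)}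
    (hx : ∀ k, r k < x k 0 ∧ ‖transverse (x k)‖ + r k < 1)
    (hsep : Pairwise fun j k => 1 ≤ dist (x j) (x k)) : x ∈ configSpace d r :=
  mem_configSpace_of hx fun j k hjk => by linarith [hr j, hr k, hsep hjk]

lemma dist_le_dist_add_single_zero {v w : EuclideanSpace ℝ (Fin d)} {a b : ℝ}
    (h : 0 ≤ (v 0 - w 0) * (a - b)) :
    dist v w ≤ dist (v + EuclideanSpace.single 0 a) (w + EuclideanSpace.single 0 b) := by
  refine le_of_sq_le_sq ?_ dist_nonneg
  have hsplit : v + EuclideanSpace.single 0 a - (w + EuclideanSpace.single 0 b) =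
      (v - w) + EuclideanSpace.single 0 (a - b) := by
    ext i; by_cases hi : i = 0 <;> simp [hi]; ring
  rw [dist_eq_norm, dist_eq_norm, hsplit, norm_add_sq_real, EuclideanSpace.inner_single_right]
  simp only [PiLp.sub_apply, starRingEnd_apply, star_trivial]
  nlinarith [sq_nonneg ‖EuclideanSpace.single (0 : Fin d) (a - b)‖]

lemma single_zero_add_mem_configSpace (hr : ∀ k, 2 * r k < 1) {a : Fin N → ℝ}
    {C : Fin N → EuclideanSpace ℝ (Fin d)} (ha : ∀ k, r k < a k) (hC0 : ∀ k, C k 0 = 0)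
    (hC : ∀ k, ‖C k‖ + r k < 1) (hsep : Pairwise fun j k => 1 ≤ |a j - a k| ∨ 1 ≤ ‖C j - C k‖) :
    (fun k => EuclideanSpace.single 0 (a k) + C k) ∈ configSpace d r := by
  have happly (k : Fin N) :
      (EuclideanSpace.single 0 (a k) + C k : EuclideanSpace ℝ (Fin d)) 0 = a k := by
    simp [hC0 k]
  have htr (k : Fin N) : transverse (EuclideanSpace.single 0 (a k) + C k) = C k := by
    rw [transverse_single_zero_add, transverse_of_apply_zero (hC0 k)]
  refine mem_configSpace_of_one_le_dist hr (fun k => ?_) fun j k hjk => ?_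
  · rw [happly, htr]; exact ⟨ha k, hC k⟩
  · rcases hsep hjk with h | h
    · rw [← happly j, ← happly k] at h
      exact h.trans (abs_sub_apply_zero_le_dist _ _)
    · rw [← htr j, ← htr k] at h
      exact h.trans (norm_transverse_sub_le_dist _ _)

lemma joinedIn_transverse_shift (hr : ∀ k, 2 * r k < 1) {a : Fin N → ℝ}
    {C : Fin N → EuclideanSpace ℝ (Fin d)} (ha : ∀ k, r k < a k) (hC0 : ∀ k, C k 0 = 0)
    (hC : ∀ k, ‖C k‖ + r k < 1) (hsep : Pairwise fun j k => 1 ≤ |a j - a k|) :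
    JoinedIn (configSpace d r) (fun k => EuclideanSpace.single 0 (a k))
      (fun k => EuclideanSpace.single 0 (a k) + C k) := by
  refine joinedIn_of_forall_mem_segment fun t ⟨ht0, ht1⟩ => ?_
  have hpoint : (1 - t) • (fun k => EuclideanSpace.single (0 : Fin d) (a k)) +
      t • (fun k => EuclideanSpace.single 0 (a k) + C k) =
      fun k => EuclideanSpace.single 0 (a k) + t • C k := by
    ext k i; by_cases hi : i = 0 <;> simp [hi]; ring
  rw [hpoint]
  refine single_zero_add_mem_configSpace hr ha (fun k => by simp [hC0 k]) (fun k => ?_)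
    fun j k hjk => Or.inl (hsep hjk)
  calc ‖t • C k‖ + r k ≤ ‖C k‖ + r k := by
        rw [norm_smul, Real.norm_of_nonneg ht0]
        gcongr
        exact mul_le_of_le_one_left (norm_nonneg _) ht1
    _ < 1 := hC k

lemma joinedIn_axial_shift (hr : ∀ k, 2 * r k < 1) {a b : Fin N → ℝ}
    {C : Fin N → EuclideanSpace ℝ (Fin d)} (ha : ∀ k, r k < a k) (hb : ∀ k, r k < b k)
    (hC0 : ∀ k, C k 0 = 0) (hC : ∀ k, ‖C k‖ + r k < 1)
    (hsep : Pairwise fun j k => (a j + 1 ≤ a k ∧ b j + 1 ≤ b k) ∨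
      (a k + 1 ≤ a j ∧ b k + 1 ≤ b j) ∨ 1 ≤ ‖C j - C k‖) :
    JoinedIn (configSpace d r) (fun k => EuclideanSpace.single 0 (a k) + C k)
      (fun k => EuclideanSpace.single 0 (b k) + C k) := by
  refine joinedIn_of_forall_mem_segment fun t ⟨ht0, ht1⟩ => ?_
  have hpoint : (1 - t) • (fun k => EuclideanSpace.single (0 : Fin d) (a k) + C k) +
      t • (fun k => EuclideanSpace.single 0 (b k) + C k) =
      fun k => EuclideanSpace.single 0 ((1 - t) * a k + t * b k) + C k := by
    ext k i; by_cases hi : i = 0 <;> simp [hi] <;> ring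
  rw [hpoint]
  refine single_zero_add_mem_configSpace hr (fun k => ?_) hC0 hC fun j k hjk => ?_
  · simpa using (convex_Ioi (r k)) (ha k) (hb k) (sub_nonneg.2 ht1) ht0 (by ring)
  · rcases hsep hjk with ⟨haj, hbj⟩ | ⟨hak, hbk⟩ | h
    · exact Or.inl (le_abs.mpr (Or.inr (by nlinarith)))
    · exact Or.inl (le_abs.mpr (Or.inl (by nlinarith)))
    · exact Or.inr h

lemma joinedIn_axial_stretch (hd : 2 ≤ d) (hr : ∀ k, 0 ≤ r k)
    {x : Fin N → EuclideanSpace ℝ (Fin d)} (hx : x ∈ configSpace d r) {ρ : Fin N → ℝ}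
    (hρ : ∀ k, 0 ≤ ρ k) (hmono : Monovary ρ fun k => x k 0) :
    JoinedIn (configSpace d r) x (fun k => x k + EuclideanSpace.single 0 (ρ k)) := by
  obtain ⟨hball, hdisj⟩ := (mem_configSpace_iff hd hr).mp hx
  refine joinedIn_of_forall_mem_segment fun t ⟨ht0, ht1⟩ => ?_
  have hpoint : (1 - t) • x + t • (fun k => x k + EuclideanSpace.single 0 (ρ k)) =
      fun k => x k + EuclideanSpace.single 0 (t * ρ k) := by
    ext k i; by_cases hi : i = 0 <;> simp [hi] <;> ring
  rw [hpoint]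
  refine mem_configSpace_of (fun k => ?_) fun j k hjk => ?_
  · have h0 : (x k + EuclideanSpace.single 0 (t * ρ k) : EuclideanSpace ℝ (Fin d)) 0 =
        x k 0 + t * ρ k := by simp
    rw [h0, map_add, transverse_single_zero, add_zero]
    exact ⟨by linarith [(hball k).1, mul_nonneg ht0 (hρ k)], (hball k).2⟩
  · refine (hdisj hjk).trans_le (dist_le_dist_add_single_zero ?_)
    rw [← mul_sub]
    nlinarith [hmono.sub_mul_sub_nonneg k j]

noncomputable def canonical (σ : Equiv.Perm (Fin N)) : Fin N → EuclideanSpace ℝ (Fin d) :=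
  fun k => EuclideanSpace.single 0 ((σ k : ℕ) + 1 : ℝ)

lemma joinedIn_canonical_transverse_shift (hr : ∀ k, 2 * r k < 1) (σ : Equiv.Perm (Fin N))
    {C : Fin N → EuclideanSpace ℝ (Fin d)} (hC0 : ∀ k, C k 0 = 0) (hC : ∀ k, ‖C k‖ + r k < 1) :
    JoinedIn (configSpace d r) (canonical σ)
      (fun k => EuclideanSpace.single 0 ((σ k : ℕ) + 1 : ℝ) + C k) :=
  joinedIn_transverse_shift hr (fun k => by linarith [hr k, Nat.cast_nonneg (α := ℝ) (σ k : ℕ)])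
    hC0 hC fun j k hjk => by simpa using Fin.one_le_abs_sub_of_ne (σ.injective.ne hjk)

lemma canonical_mem_configSpace (hr : ∀ k, 2 * r k < 1) (σ : Equiv.Perm (Fin N)) :
    canonical σ ∈ configSpace d r :=
  (joinedIn_canonical_transverse_shift hr σ (C := 0) (fun _ => rfl)
    fun k => by simpa using by linarith [hr k]).mem.1

theorem exists_joinedIn_canonical (hd : 2 ≤ d) (hr : ∀ k, 0 ≤ r k) (hr' : ∀ k, 2 * r k < 1)
    {x : Fin N → EuclideanSpace ℝ (Fin d)} (hx : x ∈ configSpace d r) :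
    ∃ σ, JoinedIn (configSpace d r) x (canonical σ) := by
  obtain ⟨hball, -⟩ := (mem_configSpace_iff hd hr).mp hx
  have hpos (k : Fin N) : 0 < x k 0 := (hr k).trans_lt (hball k).1
  set σ := (Tuple.sort fun k => x k 0).symm
  -- stretching along the axis by `T * σ` separates the balls axially
  obtain ⟨T, hT0, hT⟩ : ∃ T : ℝ, 0 ≤ T ∧ ∀ j, 1 + x j 0 ≤ T :=
    ⟨1 + ∑ k, x k 0, by
      linarith [Finset.sum_nonneg fun k (_ : k ∈ Finset.univ) => (hpos k).le], fun j => by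
      linarith [Finset.single_le_sum (fun k _ => (hpos k).le) (Finset.mem_univ j)]⟩
  set a : Fin N → ℝ := fun k => x k 0 + T * (σ k : ℕ)
  set b : Fin N → ℝ := fun k => (σ k : ℕ) + 1
  have horder {j k : Fin N} (h : σ j < σ k) : a j + 1 ≤ a k ∧ b j + 1 ≤ b k := by
    have hσ := Fin.cast_val_add_one_le_of_lt h
    exact ⟨by nlinarith [hpos k, hT j, mul_le_mul_of_nonneg_left hσ hT0], by linarith⟩
  have ha (k : Fin N) : r k < a k := by
    nlinarith [(hball k).1, mul_nonneg hT0 (Nat.cast_nonneg (α := ℝ) (σ k : ℕ))]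
  have hb (k : Fin N) : r k < b k := by linarith [hr' k, Nat.cast_nonneg (α := ℝ) (σ k : ℕ)]
  have hsep : Pairwise fun j k => 1 ≤ |a j - a k| := fun j k hjk => by
    rcases (σ.injective.ne hjk).lt_or_gt with h | h
    · exact le_abs.mpr (Or.inr (by linarith [(horder h).1]))
    · exact le_abs.mpr (Or.inl (by linarith [(horder h).1]))
  have hstretch := joinedIn_axial_stretch hd hr hx (ρ := fun k => T * (σ k : ℕ))
    (fun k => mul_nonneg hT0 (Nat.cast_nonneg _))
    ((Tuple.monovary_sort_symm fun k => x k 0).comp_monotone_left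
      (f' := fun i : Fin N => T * ((i : ℕ) : ℝ))
      fun i j hij => mul_le_mul_of_nonneg_left (by exact_mod_cast hij) hT0)
  simp only [add_single_zero_eq] at hstretch
  have hflatten := (joinedIn_transverse_shift hr' ha (C := fun k => transverse (x k))
    (fun k => transverse_apply_zero _) (fun k => (hball k).2) hsep).symm
  have hslide := joinedIn_axial_shift (d := d) hr' ha hb (C := 0) (fun k => rfl)
    (fun k => by simpa using by linarith [hr' k]) fun j k hjk => by
      rcases (σ.injective.ne hjk).lt_or_gt with h | h
      · exact Or.inl (horder h)
      · exact Or.inr (Or.inl (horder h))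
  simp only [Pi.zero_apply, add_zero] at hslide
  exact ⟨σ, hstretch.trans (hflatten.trans hslide)⟩

theorem joinedIn_canonical_swap_mul (hd : 2 ≤ d) (hr : ∀ k, 2 * r k < 1) (σ : Equiv.Perm (Fin N))
    {c s : Fin N} (hcs : (s : ℕ) = c + 1) :
    JoinedIn (configSpace d r) (canonical σ) (canonical (Equiv.swap c s * σ)) := by
  set δ : Fin N → ℝ := fun k => if σ k = c then 1 / 2 else if σ k = s then -1 / 2 else 0
  set C : Fin N → EuclideanSpace ℝ (Fin d) := fun k => EuclideanSpace.single ⟨1, hd⟩ (δ k)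
  have hC0 (k : Fin N) : C k 0 = 0 := by simp [C, Fin.ext_iff]
  have hC (k : Fin N) : ‖C k‖ + r k < 1 := by
    have : |δ k| ≤ 1 / 2 := by simp only [δ]; split_ifs <;> norm_num
    simp only [C, PiLp.norm_single, Real.norm_eq_abs]
    linarith [hr k]
  have hcs' : c ≠ s := fun h => by simp [h] at hcs
  have horder {j k : Fin N} (h : σ j < σ k) (hne : ¬(σ j = c ∧ σ k = s)) :
      ((σ j : ℕ) + 1 : ℝ) + 1 ≤ (σ k : ℕ) + 1 ∧
        ((Equiv.swap c s (σ j) : ℕ) + 1 : ℝ) + 1 ≤ (Equiv.swap c s (σ k) : ℕ) + 1 :=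
    ⟨by linarith [Fin.cast_val_add_one_le_of_lt h],
      by linarith [Fin.cast_val_add_one_le_of_lt (Equiv.swap_lt_swap_of_lt hcs h hne)]⟩
  have hslide := joinedIn_axial_shift hr (a := fun k => (σ k : ℕ) + 1)
    (b := fun k => ((Equiv.swap c s * σ) k : ℕ) + 1)
    (fun k => by linarith [hr k, Nat.cast_nonneg (α := ℝ) (σ k : ℕ)])
    (fun k => by linarith [hr k, Nat.cast_nonneg (α := ℝ) ((Equiv.swap c s * σ) k : ℕ)])
    hC0 hC fun j k hjk => by
      by_cases hcross : (σ j = c ∧ σ k = s) ∨ (σ k = c ∧ σ j = s)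
      · right; right
        rcases hcross with ⟨hj, hk⟩ | ⟨hk, hj⟩ <;>
          norm_num [C, δ, hj, hk, hcs'.symm, ← PiLp.single_sub]
      · rcases (σ.injective.ne hjk).lt_or_gt with h | h
        · exact Or.inl (horder h fun h' => hcross (Or.inl h'))
        · exact Or.inr (Or.inl (horder h fun h' => hcross (Or.inr h')))
  exact (joinedIn_canonical_transverse_shift hr σ hC0 hC).trans
    (hslide.trans (joinedIn_canonical_transverse_shift hr _ hC0 hC).symm)

theorem joinedIn_canonical_one (hd : 2 ≤ d) (hr : ∀ k, 2 * r k < 1) (σ : Equiv.Perm (Fin N)) :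
    JoinedIn (configSpace d r) (canonical 1) (canonical σ) := by
  cases N with
  | zero =>
    rw [Subsingleton.elim σ 1]
    exact JoinedIn.refl (canonical_mem_configSpace (d := d) hr 1)
  | succ n =>
    have hσ : σ ∈ Submonoid.closure (range fun i : Fin n => Equiv.swap i.castSucc i.succ) := by
      rw [Equiv.Perm.mclosure_swap_castSucc_succ]; exact Submonoid.mem_top σ
    induction hσ using Submonoid.closure_induction_left with
    | one => exact JoinedIn.refl (canonical_mem_configSpace (d := d) hr 1)
    | mul_left τ hτ σ _ ih =>
      obtain ⟨i, rfl⟩ := hτ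
      exact ih.trans (joinedIn_canonical_swap_mul hd hr σ (by simp))

theorem isPathConnected_configSpace (hd : 2 ≤ d) (hr : ∀ k, 0 ≤ r k) (hr' : ∀ k, 2 * r k < 1) :
    IsPathConnected (configSpace d r) :=
  ⟨canonical 1, canonical_mem_configSpace hr' 1, fun x hx => by
    obtain ⟨σ, hσ⟩ := exists_joinedIn_canonical hd hr hr' hx
    exact (joinedIn_canonical_one hd hr' σ).trans hσ.symm⟩

end configuration

theorem stmt_6 {d : ℕ} [NeZero d] (hd : 2 ≤ d) {N : ℕ}
    (r : Fin N → ℝ) (hr : ∀ k, 0 < r k) (hr' : ∀ k, 2 * r k < 1) :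
    ∀ x ∈ {x : Fin N → EuclideanSpace ℝ (Fin d) |
        (∀ k, closedBall (x k) (r k) ⊆
          {z : EuclideanSpace ℝ (Fin d) |
            0 < z 0 ∧ (∑ i ∈ Finset.univ.erase (0 : Fin d), (z i) ^ 2) < 1}) ∧
        Pairwise fun j k => closedBall (x j) (r j) ∩ closedBall (x k) (r k) = ∅},
      ∀ y ∈ {x : Fin N → EuclideanSpace ℝ (Fin d) |
        (∀ k, closedBall (x k) (r k) ⊆
          {z : EuclideanSpace ℝ (Fin d) |
            0 < z 0 ∧ (∑ i ∈ Finset.univ.erase (0 : Fin d), (z i) ^ 2) < 1}) ∧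
        Pairwise fun j k => closedBall (x j) (r j) ∩ closedBall (x k) (r k) = ∅},
      JoinedIn {x : Fin N → EuclideanSpace ℝ (Fin d) |
        (∀ k, closedBall (x k) (r k) ⊆
          {z : EuclideanSpace ℝ (Fin d) |
            0 < z 0 ∧ (∑ i ∈ Finset.univ.erase (0 : Fin d), (z i) ^ 2) < 1}) ∧
        Pairwise fun j k => closedBall (x j) (r j) ∩ closedBall (x k) (r k) = ∅}
      x y :=
  (isPathConnected_configSpace hd (fun k => (hr k).le) hr').joinedIn
end
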